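/- arXiv:2106.15958 — 12 statements merged into one kernel-verified Lean document; each statement's English description precedes it below -/
import Mathlib

section
/- Let V: ℝ^m → ℝ^m be the quadratic operator defined by (Vx)_k = Σ_{i,j=1}^m P_{ijk} x_i x_j with symmetric coefficients P_{ijk} = P_{jik}. If (1) Σ_{k=1}^m P_{ijk} = 1 for all i,j; (2) 0 ≤ P_{iik} ≤ 1 for all i,k; and (3) P_{ijk} ≥ -(1/(m-1))·√(P_{iik}·P_{jjk}) for all i,j,k with i≠j, then V maps the standard simplex S^{m-1} = {x ∈ ℝ^m : x_i ≥ 0, Σ x_i = 1} into itself. -/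
/-- Sufficient conditions for a quadratic operator given by a cubic matrix
to preserve the standard simplex. -/
theorem quadratic_operator_preserves_simplex_of_sufficient_conditions
    (m : ℕ) (hm : 2 ≤ m) (P : Fin m → Fin m → Fin m → ℝ)
    (hsym : ∀ i j k, P i j k = P j i k)
    (h1 : ∀ i j, ∑ k, P i j k = 1)
    (h2 : ∀ i k, 0 ≤ P i i k ∧ P i i k ≤ 1)
    (h3 : ∀ i j k, i ≠ j →
      -(1 / ((m : ℝ) - 1)) * Real.sqrt (P i i k * P j j k) ≤ P i j k)
    (x : Fin m → ℝ) (hx : x ∈ stdSimplex ℝ (Fin m)) :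
    (fun k => ∑ i, ∑ j, P i j k * x i * x j) ∈ stdSimplex ℝ (Fin m) := by
  obtain ⟨hx0, hx1⟩ := hx
  have hm1 : (0:ℝ) < (m:ℝ) - 1 := by
    have : (2:ℝ) ≤ (m:ℝ) := by exact_mod_cast hm
    linarith
  refine ⟨fun k => ?_, ?_⟩
  · -- nonnegativity of each coordinate
    set a : Fin m → ℝ := fun i => Real.sqrt (P i i k) * x i with ha
    have ha0 : ∀ i, 0 ≤ a i := fun i => mul_nonneg (Real.sqrt_nonneg _) (hx0 i)
    have key : ∀ i, ∀ j ∈ Finset.univ.erase i,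
        -(1/((m:ℝ)-1)) * (a i * a j) ≤ P i j k * x i * x j := by
      intro i j hj
      have hij : i ≠ j := (Finset.ne_of_mem_erase hj).symm
      have h := h3 i j k hij
      have hxx : 0 ≤ x i * x j := mul_nonneg (hx0 i) (hx0 j)
      have heq : Real.sqrt (P i i k * P j j k) * (x i * x j) = a i * a j := by
        rw [Real.sqrt_mul (h2 i k).1]; simp [ha]; ring
      calc -(1/((m:ℝ)-1)) * (a i * a j)
          = -(1/((m:ℝ)-1)) * Real.sqrt (P i i k * P j j k) * (x i * x j) := by
            rw [← heq]; ring
        _ ≤ P i j k * (x i * x j) := mul_le_mul_of_nonneg_right h hxx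
        _ = P i j k * x i * x j := by ring
    have split : ∀ i, ∑ j, P i j k * x i * x j
        = a i ^ 2 + ∑ j ∈ Finset.univ.erase i, P i j k * x i * x j := by
      intro i
      rw [← Finset.add_sum_erase _ _ (Finset.mem_univ i)]
      congr 1
      simp only [ha]
      rw [mul_pow, Real.sq_sqrt (h2 i k).1]; ring
    have lower : ∑ i, ∑ j ∈ Finset.univ.erase i, (-(1/((m:ℝ)-1)) * (a i * a j))
        ≤ ∑ i, ∑ j ∈ Finset.univ.erase i, P i j k * x i * x j :=
      Finset.sum_le_sum fun i _ => Finset.sum_le_sum (key i)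
    have cross_eq : ∑ i, ∑ j ∈ Finset.univ.erase i, a i * a j
        = (∑ i, a i)^2 - ∑ i, a i ^ 2 := by
      have : ∀ i : Fin m, ∑ j ∈ Finset.univ.erase i, a i * a j
          = a i * (∑ j, a j) - a i ^ 2 := by
        intro i
        rw [← Finset.mul_sum, Finset.sum_erase_eq_sub (Finset.mem_univ i)]
        ring
      simp only [this, Finset.sum_sub_distrib, ← Finset.sum_mul]
      ring
    have cs : (∑ i, a i)^2 ≤ (m:ℝ) * ∑ i, a i ^ 2 := by
      have := sq_sum_le_card_mul_sum_sq (s := (Finset.univ : Finset (Fin m))) (f := a)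
      simpa using this
    have cross : ∑ i, ∑ j ∈ Finset.univ.erase i, a i * a j ≤ ((m:ℝ)-1) * ∑ i, a i ^ 2 := by
      have hsq : 0 ≤ ∑ i, a i ^ 2 := Finset.sum_nonneg fun i _ => sq_nonneg _
      rw [cross_eq]; nlinarith
    have factored : ∑ i, ∑ j ∈ Finset.univ.erase i, (-(1/((m:ℝ)-1)) * (a i * a j))
        = -(1/((m:ℝ)-1)) * ∑ i, ∑ j ∈ Finset.univ.erase i, a i * a j := by
      simp only [← Finset.mul_sum]
    have hsq : 0 ≤ ∑ i, a i ^ 2 := Finset.sum_nonneg fun i _ => sq_nonneg _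
    have final : (0:ℝ) ≤ ∑ i, a i ^ 2 + ∑ i, ∑ j ∈ Finset.univ.erase i, P i j k * x i * x j := by
      have h5 : -(1/((m:ℝ)-1)) * (((m:ℝ)-1) * ∑ i, a i ^ 2)
          ≤ -(1/((m:ℝ)-1)) * ∑ i, ∑ j ∈ Finset.univ.erase i, a i * a j := by
        apply mul_le_mul_of_nonpos_left cross
        have : 0 < 1/((m:ℝ)-1) := by positivity
        linarith
      have h6 : -(1/((m:ℝ)-1)) * (((m:ℝ)-1) * ∑ i, a i ^ 2) = -(∑ i, a i ^ 2) := by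
        field_simp
      rw [h6] at h5
      rw [← factored] at h5
      linarith
    calc (0:ℝ) ≤ ∑ i, a i ^ 2 + ∑ i, ∑ j ∈ Finset.univ.erase i, P i j k * x i * x j := final
      _ = ∑ i, (a i ^ 2 + ∑ j ∈ Finset.univ.erase i, P i j k * x i * x j) := by
          rw [Finset.sum_add_distrib]
      _ = ∑ i, ∑ j, P i j k * x i * x j := by
          exact Finset.sum_congr rfl fun i _ => (split i).symm
  · -- sum equals one
    have swap : ∑ k, ∑ i, ∑ j, P i j k * x i * x j
        = ∑ i, ∑ j, ∑ k, P i j k * x i * x j := by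
      rw [Finset.sum_comm]
      exact Finset.sum_congr rfl fun i _ => Finset.sum_comm
    rw [swap]
    have : ∀ i j : Fin m, ∑ k, P i j k * x i * x j = x i * x j := by
      intro i j
      rw [← Finset.sum_mul, ← Finset.sum_mul]
      rw [h1]; ring
    simp only [this]
    rw [← Finset.sum_mul_sum]
    rw [hx1]; ring
end

section
/- Let V be a quadratic operator on ℝ^m with symmetric coefficients P_{ijk}. If V maps the standard simplex S^{m-1} into itself, then for all i,j,k: (1) Σ_{k=1}^m P_{ijk} = 1; (2) 0 ≤ P_{iik} ≤ 1; and (3) -√(P_{iik}·P_{jjk}) ≤ P_{ijk} ≤ 1 + √((1-P_{iik})·(1-P_{jjk})). -/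
private lemma sum_one_pt {m : ℕ} {i : Fin m} {X : Fin m → ℝ}
    (hX : ∀ l, X l = if l = i then 1 else 0) (g : Fin m → ℝ) :
    ∑ l, g l * X l = g i := by
  have hterm : ∀ l, g l * X l = if l = i then g i else 0 := by
    intro l
    rw [hX l]
    by_cases h : l = i
    · subst h; simp
    · simp [h]
  rw [Finset.sum_congr rfl fun l _ => hterm l]
  simp

private lemma sum_two_pt {m : ℕ} {i j : Fin m} (hij : i ≠ j) {t : ℝ} {X : Fin m → ℝ}
    (hX : ∀ l, X l = if l = i then t else if l = j then 1 - t else 0) (g : Fin m → ℝ) :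
    ∑ l, g l * X l = g i * t + g j * (1 - t) := by
  have hterm : ∀ l, g l * X l
      = (if l = i then g i * t else 0) + (if l = j then g j * (1 - t) else 0) := by
    intro l
    rw [hX l]
    by_cases h1 : l = i
    · subst h1; simp [hij]
    · by_cases h2 : l = j
      · subst h2; simp [h1]
      · simp [h1, h2]
  rw [Finset.sum_congr rfl fun l _ => hterm l, Finset.sum_add_distrib]
  simp

private lemma one_pt_val {m : ℕ} {i : Fin m} {X : Fin m → ℝ}
    (hX : ∀ l, X l = if l = i then 1 else 0) (Q : Fin m → Fin m → ℝ) :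
    ∑ i', ∑ j', Q i' j' * X i' * X j' = Q i i := by
  have inner : ∀ i', ∑ j', Q i' j' * X i' * X j' = Q i' i * X i' :=
    fun i' => sum_one_pt hX (fun j' => Q i' j' * X i')
  rw [Finset.sum_congr rfl fun i' _ => inner i']
  exact sum_one_pt hX (fun i' => Q i' i)

private lemma two_pt_val {m : ℕ} {i j : Fin m} (hij : i ≠ j) {t : ℝ} {X : Fin m → ℝ}
    (hX : ∀ l, X l = if l = i then t else if l = j then 1 - t else 0)
    (Q : Fin m → Fin m → ℝ) (hQ : Q j i = Q i j) :
    ∑ i', ∑ j', Q i' j' * X i' * X j'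
      = Q i i * t ^ 2 + 2 * Q i j * (t * (1 - t)) + Q j j * (1 - t) ^ 2 := by
  have inner : ∀ i', ∑ j', Q i' j' * X i' * X j'
      = (Q i' i * X i') * t + (Q i' j * X i') * (1 - t) :=
    fun i' => sum_two_pt hij hX (fun j' => Q i' j' * X i')
  calc ∑ i', ∑ j', Q i' j' * X i' * X j'
      = ∑ i', ((Q i' i * X i') * t + (Q i' j * X i') * (1 - t)) :=
        Finset.sum_congr rfl fun i' _ => inner i'
    _ = ∑ i', (Q i' i * t + Q i' j * (1 - t)) * X i' :=
        Finset.sum_congr rfl fun i' _ => by ring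
    _ = (Q i i * t + Q i j * (1 - t)) * t + (Q j i * t + Q j j * (1 - t)) * (1 - t) :=
        sum_two_pt hij hX _
    _ = Q i i * t ^ 2 + 2 * Q i j * (t * (1 - t)) + Q j j * (1 - t) ^ 2 := by
        rw [hQ]; ring

private lemma quad_lb (a b c : ℝ) (ha : 0 ≤ a) (hc : 0 ≤ c)
    (h : ∀ t : ℝ, 0 ≤ t → t ≤ 1 →
      0 ≤ a * t ^ 2 + 2 * b * (t * (1 - t)) + c * (1 - t) ^ 2) :
    -Real.sqrt (a * c) ≤ b := by
  have h' : ∀ s : ℝ, 0 ≤ s → 0 ≤ a * s ^ 2 + 2 * b * s + c := by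
    intro s hs
    have h1 : (0:ℝ) < 1 + s := by linarith
    have h1' : (1:ℝ) + s ≠ 0 := ne_of_gt h1
    have ht := h (s / (1 + s)) (by positivity) (by rw [div_le_one h1]; linarith)
    have hts : 1 - s / (1 + s) = 1 / (1 + s) := by field_simp; ring
    rw [hts] at ht
    have heq : a * (s / (1 + s)) ^ 2 + 2 * b * ((s / (1 + s)) * (1 / (1 + s)))
        + c * (1 / (1 + s)) ^ 2 = (a * s ^ 2 + 2 * b * s + c) / (1 + s) ^ 2 := by
      field_simp
    rw [heq] at ht
    rcases div_nonneg_iff.mp ht with ⟨h2, _⟩ | ⟨_, h2⟩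
    · exact h2
    · nlinarith
  by_contra hb
  push_neg at hb
  have hsq : 0 ≤ Real.sqrt (a * c) := Real.sqrt_nonneg _
  have hb0 : b < 0 := by linarith
  have hbne : b ≠ 0 := ne_of_lt hb0
  rcases eq_or_lt_of_le ha with ha0 | ha0
  · have hs : (0:ℝ) ≤ (c + 1) / (-2 * b) := div_nonneg (by linarith) (by linarith)
    have h2 := h' ((c + 1) / (-2 * b)) hs
    have h3 : 2 * b * ((c + 1) / (-2 * b)) = -(c + 1) := by
      field_simp
    rw [← ha0] at h2
    nlinarith [h2, h3]
  · have h2 := h' (-b / a) (div_nonneg (by linarith) (le_of_lt ha0))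
    have heq : a * (-b / a) ^ 2 + 2 * b * (-b / a) + c = c - b ^ 2 / a := by
      field_simp
      ring
    rw [heq] at h2
    have hb2 : b ^ 2 ≤ c * a := (div_le_iff₀ ha0).mp (by linarith)
    have hss : Real.sqrt (a * c) ^ 2 = a * c := Real.sq_sqrt (mul_nonneg ha hc)
    nlinarith [hb2, hss, hsq, hb]

/-- Necessary conditions on the cubic matrix of a quadratic operator that
preserves the standard simplex. -/
theorem necessary_conditions_of_quadratic_operator_preserving_simplex
    (m : ℕ) (hm : 2 ≤ m) (P : Fin m → Fin m → Fin m → ℝ)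
    (hsym : ∀ i j k, P i j k = P j i k)
    (hV : ∀ x ∈ stdSimplex ℝ (Fin m),
      (fun k => ∑ i, ∑ j, P i j k * x i * x j) ∈ stdSimplex ℝ (Fin m)) :
    (∀ i j, ∑ k, P i j k = 1) ∧
    (∀ i k, 0 ≤ P i i k ∧ P i i k ≤ 1) ∧
    (∀ i j k, -Real.sqrt (P i i k * P j j k) ≤ P i j k ∧
      P i j k ≤ 1 + Real.sqrt ((1 - P i i k) * (1 - P j j k))) := by
  have coord_le : ∀ y ∈ stdSimplex ℝ (Fin m), ∀ k, y k ≤ 1 := by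
    intro y hy k
    have h := Finset.single_le_sum (fun l _ => hy.1 l) (Finset.mem_univ k)
    exact le_of_le_of_eq h hy.2
  -- vertices
  have hvmem : ∀ i : Fin m,
      (fun l => if l = i then (1:ℝ) else 0) ∈ stdSimplex ℝ (Fin m) := by
    intro i
    constructor
    · intro l; dsimp only; split <;> norm_num
    · simp
  have hvval : ∀ i k : Fin m,
      (∑ i', ∑ j', P i' j' k * (if i' = i then (1:ℝ) else 0)
        * (if j' = i then (1:ℝ) else 0)) = P i i k := by
    intro i k
    exact one_pt_val (X := fun l => if l = i then (1:ℝ) else 0) (fun l => rfl)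
      (fun a b => P a b k)
  have F1 : ∀ i k, 0 ≤ P i i k := by
    intro i k
    have h : 0 ≤ ∑ i', ∑ j', P i' j' k * (if i' = i then (1:ℝ) else 0)
        * (if j' = i then (1:ℝ) else 0) := (hV _ (hvmem i)).1 k
    rw [hvval i k] at h
    exact h
  have F2 : ∀ i, ∑ k, P i i k = 1 := by
    intro i
    have h : (∑ k, ∑ i', ∑ j', P i' j' k * (if i' = i then (1:ℝ) else 0)
        * (if j' = i then (1:ℝ) else 0)) = 1 := (hV _ (hvmem i)).2
    rw [Finset.sum_congr rfl fun k _ => hvval i k] at h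
    exact h
  have F3 : ∀ i k, P i i k ≤ 1 := by
    intro i k
    have h := Finset.single_le_sum (f := fun k => P i i k)
      (fun k _ => F1 i k) (Finset.mem_univ k)
    rw [F2 i] at h
    exact h
  -- segments
  have Hq : ∀ i j : Fin m, i ≠ j → ∀ k : Fin m, ∀ t : ℝ, 0 ≤ t → t ≤ 1 →
      (0 ≤ P i i k * t ^ 2 + 2 * P i j k * (t * (1 - t)) + P j j k * (1 - t) ^ 2 ∧
        P i i k * t ^ 2 + 2 * P i j k * (t * (1 - t)) + P j j k * (1 - t) ^ 2 ≤ 1) ∧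
      (∑ k', (P i i k' * t ^ 2 + 2 * P i j k' * (t * (1 - t))
        + P j j k' * (1 - t) ^ 2)) = 1 := by
    intro i j hij k t h0 h1
    have hX : ∀ l : Fin m, (fun l => if l = i then t else if l = j then 1 - t else 0) l
        = if l = i then t else if l = j then 1 - t else 0 := fun l => rfl
    have hmem : (fun l => if l = i then t else if l = j then 1 - t else 0)
        ∈ stdSimplex ℝ (Fin m) := by
      constructor
      · intro l; dsimp only; split_ifs <;> linarith
      · have h := sum_two_pt hij hX (fun _ => (1:ℝ))
        simp only [one_mul] at h
        rw [h]; ring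
    have hval : ∀ k' : Fin m,
        (∑ i', ∑ j', P i' j' k' * (if i' = i then t else if i' = j then 1 - t else 0)
          * (if j' = i then t else if j' = j then 1 - t else 0))
        = P i i k' * t ^ 2 + 2 * P i j k' * (t * (1 - t)) + P j j k' * (1 - t) ^ 2 :=
      fun k' => two_pt_val hij hX (fun a b => P a b k') (hsym j i k')
    have hm1 := hV _ hmem
    refine ⟨⟨?_, ?_⟩, ?_⟩
    · have h : 0 ≤ ∑ i', ∑ j', P i' j' k
          * (if i' = i then t else if i' = j then 1 - t else 0)
          * (if j' = i then t else if j' = j then 1 - t else 0) := hm1.1 k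
      rw [hval k] at h; exact h
    · have h : (∑ i', ∑ j', P i' j' k
          * (if i' = i then t else if i' = j then 1 - t else 0)
          * (if j' = i then t else if j' = j then 1 - t else 0)) ≤ 1 :=
        coord_le _ hm1 k
      rw [hval k] at h; exact h
    · have h : (∑ k', ∑ i', ∑ j', P i' j' k'
          * (if i' = i then t else if i' = j then 1 - t else 0)
          * (if j' = i then t else if j' = j then 1 - t else 0)) = 1 := hm1.2
      rw [Finset.sum_congr rfl fun k' _ => hval k'] at h
      exact h
  refine ⟨?_, fun i k => ⟨F1 i k, F3 i k⟩, ?_⟩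
  · intro i j
    by_cases hij : i = j
    · subst hij; exact F2 i
    · have h := (Hq i j hij i (1/2) (by norm_num) (by norm_num)).2
      have expand : (∑ k', (P i i k' * (1/2:ℝ) ^ 2 + 2 * P i j k' * ((1/2) * (1 - 1/2))
          + P j j k' * (1 - 1/2:ℝ) ^ 2))
          = (∑ k', P i i k') * (1/4) + (∑ k', P i j k') * (1/2)
            + (∑ k', P j j k') * (1/4) := by
        rw [Finset.sum_mul, Finset.sum_mul, Finset.sum_mul,
          ← Finset.sum_add_distrib, ← Finset.sum_add_distrib]
        exact Finset.sum_congr rfl fun k' _ => by ring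
      rw [expand] at h
      have h2 := F2 i
      have h3 := F2 j
      linarith
  · intro i j k
    by_cases hij : i = j
    · subst hij
      have h1 := F1 i k
      have h3 := F3 i k
      constructor
      · rw [Real.sqrt_mul_self h1]; linarith
      · rw [Real.sqrt_mul_self (by linarith : (0:ℝ) ≤ 1 - P i i k)]; linarith
    · constructor
      · exact quad_lb _ _ _ (F1 i k) (F1 j k)
          (fun t h0 h1 => ((Hq i j hij k t h0 h1).1).1)
      · have hub := quad_lb (1 - P i i k) (1 - P i j k) (1 - P j j k)
          (by linarith [F3 i k]) (by linarith [F3 j k]) ?_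
        · linarith
        · intro t h0 h1
          have h2 := ((Hq i j hij k t h0 h1).1).2
          have hid : t ^ 2 + 2 * (t * (1 - t)) + (1 - t) ^ 2 = 1 := by ring
          nlinarith [h2, hid]
end

section
/- Let a, b, c ∈ ℝ with 0 ≤ a ≤ 1 and 0 ≤ c ≤ 1, and define f(α) = (a - 2b + c)α² + 2(b - c)α + c. Then f(α) ∈ [0,1] for all α ∈ [0,1] if and only if -√(ac) ≤ b ≤ 1 + √((1-a)(1-c)). -/
lemma key_nonneg_iff (a b c : ℝ) (ha : 0 ≤ a) (hc : 0 ≤ c) :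
    (∀ α ∈ Set.Icc (0:ℝ) 1, 0 ≤ a*α^2 + 2*b*α*(1-α) + c*(1-α)^2) ↔
      -Real.sqrt (a*c) ≤ b := by
  have hs : Real.sqrt (a*c) = Real.sqrt a * Real.sqrt c := Real.sqrt_mul ha c
  have hsa : Real.sqrt a ^ 2 = a := Real.sq_sqrt ha
  have hsc : Real.sqrt c ^ 2 = c := Real.sq_sqrt hc
  have hsa0 : 0 ≤ Real.sqrt a := Real.sqrt_nonneg a
  have hsc0 : 0 ≤ Real.sqrt c := Real.sqrt_nonneg c
  constructor
  · intro h
    by_contra hb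
    push_neg at hb
    rw [hs] at hb
    rcases eq_or_lt_of_le ha with ha0 | ha0
    · obtain rfl : a = 0 := ha0.symm
      have hb' : b < 0 := by
        have h0 : Real.sqrt 0 = 0 := Real.sqrt_zero
        nlinarith
      rcases eq_or_lt_of_le hc with hc0 | hc0
      · obtain rfl : c = 0 := hc0.symm
        have := h (1/2) (by norm_num)
        nlinarith
      · have hd : 0 < c - 2*b := by linarith
        set α := (c - b)/(c - 2*b) with hα
        have hmem : α ∈ Set.Icc (0:ℝ) 1 := by
          constructor
          · apply div_nonneg (by linarith) (by linarith)
          · rw [div_le_one hd]; linarith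
        have hf := h α hmem
        have heq : ((0:ℝ)*α^2 + 2*b*α*(1-α) + c*(1-α)^2) * (c-2*b)^2
            = -b^2*(c-2*b) := by
          rw [hα]; linear_combination (2*b*(c-2*b) - 2*b*((c - b)/(c - 2*b)*(c-2*b) + (c-b)) + c*((c - b)/(c - 2*b)*(c-2*b) + (c-b) - 2*(c-2*b))) * div_mul_cancel₀ (c-b) hd.ne'
        nlinarith [mul_nonneg hf (sq_nonneg (c-2*b)), mul_pos (mul_pos (neg_pos.2 hb') (neg_pos.2 hb')) hd]
    · rcases eq_or_lt_of_le hc with hc0 | hc0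
      · obtain rfl : c = 0 := hc0.symm
        have hb' : b < 0 := by
          have h0 : Real.sqrt 0 = 0 := Real.sqrt_zero
          nlinarith
        have hd : 0 < a - 2*b := by linarith
        set α := (-b)/(a - 2*b) with hα
        have hmem : α ∈ Set.Icc (0:ℝ) 1 := by
          constructor
          · apply div_nonneg (by linarith) (by linarith)
          · rw [div_le_one hd]; linarith
        have hf := h α hmem
        have heq : (a*α^2 + 2*b*α*(1-α) + (0:ℝ)*(1-α)^2) * (a-2*b)^2
            = -b^2*(a-2*b) := by
          rw [hα]; linear_combination ((a-2*b)*((-b)/(a - 2*b)*(a-2*b) + (-b)) + 2*b*(a-2*b)) * div_mul_cancel₀ (-b) hd.ne'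
        nlinarith [mul_nonneg hf (sq_nonneg (a-2*b)), mul_pos (mul_pos (neg_pos.2 hb') (neg_pos.2 hb')) hd]
      · have hsa1 : 0 < Real.sqrt a := Real.sqrt_pos.2 ha0
        have hsc1 : 0 < Real.sqrt c := Real.sqrt_pos.2 hc0
        have hd : 0 < Real.sqrt a + Real.sqrt c := by linarith
        set α := Real.sqrt c / (Real.sqrt a + Real.sqrt c) with hα
        have hmem : α ∈ Set.Icc (0:ℝ) 1 := by
          constructor
          · positivity
          · rw [div_le_one hd]; linarith
        have hf := h α hmem
        have heq : (a*α^2 + 2*b*α*(1-α) + c*(1-α)^2) * (Real.sqrt a + Real.sqrt c)^2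
            = 2*a*c + 2*b*(Real.sqrt a * Real.sqrt c) := by
          rw [hα]; field_simp; ring_nf; rw [hsa, hsc]; ring
        have hac : (Real.sqrt a * Real.sqrt c)^2 = a*c := by
          rw [mul_pow, hsa, hsc]
        have hneg : 2*a*c + 2*b*(Real.sqrt a * Real.sqrt c) < 0 := by
          nlinarith [mul_pos hsa1 hsc1]
        nlinarith [mul_nonneg hf (sq_nonneg (Real.sqrt a + Real.sqrt c))]
  · intro hb α hα
    obtain ⟨h0, h1⟩ := hα
    have key : 0 ≤ (Real.sqrt a * α - Real.sqrt c * (1-α))^2 := sq_nonneg _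
    have h2 : 0 ≤ (Real.sqrt (a*c) + b) * (α * (1-α)) := by
      apply mul_nonneg (by linarith) (mul_nonneg h0 (by linarith))
    rw [hs] at h2
    nlinarith [mul_nonneg hsa0 hsc0]
/-- The quadratic `f(α) = (a-2b+c)α² + 2(b-c)α + c` takes values in `[0,1]`
for all `α ∈ [0,1]` iff `-√(ac) ≤ b ≤ 1 + √((1-a)(1-c))`. -/
theorem quadratic_in_unit_interval_iff (a b c : ℝ)
    (ha : a ∈ Set.Icc (0 : ℝ) 1) (hc : c ∈ Set.Icc (0 : ℝ) 1) :
    (∀ α ∈ Set.Icc (0 : ℝ) 1,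
      (a - 2 * b + c) * α ^ 2 + 2 * (b - c) * α + c ∈ Set.Icc (0 : ℝ) 1) ↔
    (-Real.sqrt (a * c) ≤ b ∧ b ≤ 1 + Real.sqrt ((1 - a) * (1 - c))) := by
  obtain ⟨ha0, ha1⟩ := ha
  obtain ⟨hc0, hc1⟩ := hc
  have h1 := key_nonneg_iff a b c ha0 hc0
  have h2 := key_nonneg_iff (1-a) (1-b) (1-c) (by linarith) (by linarith)
  constructor
  · rintro h
    constructor
    · rw [← h1]
      intro α hα
      have := (h α hα).1
      nlinarith
    · have : -Real.sqrt ((1-a)*(1-c)) ≤ 1 - b := by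
        rw [← h2]
        intro α hα
        have := (h α hα).2
        nlinarith
      linarith
  · rintro ⟨hbl, hbr⟩ α hα
    have e1 : 0 ≤ a*α^2 + 2*b*α*(1-α) + c*(1-α)^2 := h1.2 hbl α hα
    have e2 : 0 ≤ (1-a)*α^2 + 2*(1-b)*α*(1-α) + (1-c)*(1-α)^2 :=
      h2.2 (by linarith) α hα
    constructor
    · nlinarith
    · nlinarith
end

section
/- For m ≥ 3, there exists a cubic matrix (P_{ijk}) satisfying the conditions: Σ_k P_{ijk} = 1 for all i,j; 0 ≤ P_{iik} ≤ 1 for all i,k; and -√(P_{iik}P_{jjk}) ≤ P_{ijk} ≤ 1 + √((1-P_{iik})(1-P_{jjk})) for all i≠j,k — such that the corresponding quadratic operator (Vx)_k = Σ_{i,j} P_{ijk} x_i x_j does NOT map the simplex S^{m-1} into itself. -/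
/-- For `m ≥ 3`, the necessary conditions i), ii), iii') are not sufficient:
there is a cubic matrix satisfying them whose quadratic operator does not
preserve the simplex. -/
theorem exists_cubic_matrix_satisfying_necessary_conditions_not_preserving_simplex
    (m : ℕ) (hm : 3 ≤ m) :
    ∃ P : Fin m → Fin m → Fin m → ℝ,
      (∀ i j k, P i j k = P j i k) ∧
      (∀ i j, ∑ k, P i j k = 1) ∧
      (∀ i k, 0 ≤ P i i k ∧ P i i k ≤ 1) ∧
      (∀ i j k, i ≠ j →
        -Real.sqrt (P i i k * P j j k) ≤ P i j k ∧
        P i j k ≤ 1 + Real.sqrt ((1 - P i i k) * (1 - P j j k))) ∧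
      ∃ x ∈ stdSimplex ℝ (Fin m),
        (fun k => ∑ i, ∑ j, P i j k * x i * x j) ∉ stdSimplex ℝ (Fin m) := by
  have hm0 : 0 < m := by omega
  haveI : NeZero m := ⟨by omega⟩
  have h01 : (0 : Fin m) ≠ (1 : Fin m) := by
    simp [Fin.ext_iff, Fin.val_zero, Fin.val_one, Nat.mod_eq_of_lt (by omega : 1 < m)]
  refine ⟨fun i j k => if i = j then (if k = 0 then 1 else 0)
      else (if k = 0 then -1 else if k = 1 then 2 else 0), ?_, ?_, ?_, ?_, ?_⟩
  · intro i j k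
    by_cases h : i = j <;> simp [h, eq_comm]
  · intro i j
    by_cases h : i = j
    · simp [h, Finset.sum_ite_eq']
    · simp only [h, if_false]
      have key : ∀ k : Fin m, (if k = 0 then (-1 : ℝ) else if k = 1 then 2 else 0)
          = (if k = 0 then (-1 : ℝ) else 0) + (if k = 1 then 2 else 0) := by
        intro k
        by_cases h0 : k = 0
        · subst h0; simp [h01]
        · simp [h0]
      rw [Finset.sum_congr rfl (fun k _ => key k), Finset.sum_add_distrib]
      simp [Finset.sum_ite_eq']
      norm_num
  · intro i k
    by_cases h : k = 0 <;> simp [h]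
  · intro i j k hij
    simp only [hij, if_false, if_pos rfl]
    by_cases h0 : k = 0
    · simp [h0]
    · by_cases h1 : k = 1
      · simp [h0, h1, Ne.symm h01]
        norm_num
      · simp [h0, h1]
  · refine ⟨fun _ => (m : ℝ)⁻¹, ⟨fun _ => by positivity, ?_⟩, ?_⟩
    · simp [Finset.sum_const, Finset.card_univ]
    · intro hmem
      have h0 := hmem.1 0
      have hval : (∑ i : Fin m, ∑ j : Fin m,
          (if i = j then (if (0 : Fin m) = 0 then (1:ℝ) else 0)
            else (if (0 : Fin m) = 0 then -1 else if (0 : Fin m) = 1 then 2 else 0))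
            * (m : ℝ)⁻¹ * (m : ℝ)⁻¹) = (2 - m) * (m:ℝ)⁻¹ := by
        simp only [eq_self_iff_true, if_true]
        have inner : ∀ i : Fin m, ∑ j : Fin m,
            (if i = j then (1:ℝ) else -1) * (m : ℝ)⁻¹ * (m : ℝ)⁻¹
            = (2 - m) * ((m:ℝ)⁻¹ * (m:ℝ)⁻¹) := by
          intro i
          have key : ∀ j : Fin m, (if i = j then (1:ℝ) else -1) * (m : ℝ)⁻¹ * (m : ℝ)⁻¹
              = (if i = j then (2:ℝ) else 0) * ((m:ℝ)⁻¹ * (m:ℝ)⁻¹)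
                - (m:ℝ)⁻¹ * (m:ℝ)⁻¹ := by
            intro j; by_cases h : i = j <;> simp [h] <;> ring
          rw [Finset.sum_congr rfl (fun j _ => key j), Finset.sum_sub_distrib]
          simp [Finset.sum_ite_eq, Finset.sum_const, Finset.card_univ]
          ring
        rw [Finset.sum_congr rfl (fun i _ => inner i)]
        simp only [Finset.sum_const, Finset.card_univ, Fintype.card_fin, nsmul_eq_mul]
        have hmne : (m:ℝ) ≠ 0 := by positivity
        field_simp
      have h0' : (0:ℝ) ≤ (2 - m) * (m:ℝ)⁻¹ := by rw [← hval]; exact h0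
      have hmR : (3:ℝ) ≤ (m:ℝ) := by exact_mod_cast hm
      have hneg : (2 - (m:ℝ)) * (m:ℝ)⁻¹ < 0 := by
        apply mul_neg_of_neg_of_pos
        · linarith
        · positivity
      linarith
end

section
/- For a, c ∈ [0,1] and b ∈ [-√(ac), 1 + √((1-a)(1-c))], the map V(x,y) = (ax² + 2bxy + cy², (1-a)x² + 2(1-b)xy + (1-c)y²) maps the one-dimensional simplex S¹ = {(x,y) : x,y ≥ 0, x+y=1} into itself. -/
/-- For `a, c ∈ [0,1]` and `b ∈ [-√(ac), 1 + √((1-a)(1-c))]`, the quadratic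
operator `V(x,y) = (ax² + 2bxy + cy², (1-a)x² + 2(1-b)xy + (1-c)y²)` maps
the one-dimensional simplex into itself. -/
theorem one_dim_quadratic_operator_preserves_simplex
    (a b c : ℝ) (ha : a ∈ Set.Icc (0 : ℝ) 1) (hc : c ∈ Set.Icc (0 : ℝ) 1)
    (hb : -Real.sqrt (a * c) ≤ b ∧ b ≤ 1 + Real.sqrt ((1 - a) * (1 - c)))
    (x y : ℝ) (hx : 0 ≤ x) (hy : 0 ≤ y) (hxy : x + y = 1) :
    0 ≤ a * x ^ 2 + 2 * b * x * y + c * y ^ 2 ∧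
    0 ≤ (1 - a) * x ^ 2 + 2 * (1 - b) * x * y + (1 - c) * y ^ 2 ∧
    (a * x ^ 2 + 2 * b * x * y + c * y ^ 2) +
      ((1 - a) * x ^ 2 + 2 * (1 - b) * x * y + (1 - c) * y ^ 2) = 1 := by
  obtain ⟨ha0, ha1⟩ := ha
  obtain ⟨hc0, hc1⟩ := hc
  obtain ⟨hb1, hb2⟩ := hb
  have hxy2 : (0:ℝ) ≤ x * y := mul_nonneg hx hy
  have h1 : Real.sqrt a * Real.sqrt c = Real.sqrt (a * c) :=
    (Real.sqrt_mul ha0 c).symm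
  have h2 : Real.sqrt a * Real.sqrt a = a := Real.mul_self_sqrt ha0
  have h3 : Real.sqrt c * Real.sqrt c = c := Real.mul_self_sqrt hc0
  have h4 : Real.sqrt (1 - a) * Real.sqrt (1 - c) = Real.sqrt ((1 - a) * (1 - c)) :=
    (Real.sqrt_mul (by linarith) (1 - c)).symm
  have h5 : Real.sqrt (1 - a) * Real.sqrt (1 - a) = 1 - a :=
    Real.mul_self_sqrt (by linarith)
  have h6 : Real.sqrt (1 - c) * Real.sqrt (1 - c) = 1 - c :=
    Real.mul_self_sqrt (by linarith)
  refine ⟨?_, ?_, by nlinarith⟩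
  · nlinarith [sq_nonneg (Real.sqrt a * x - Real.sqrt c * y),
      mul_le_mul_of_nonneg_left hb1 (le_of_lt (show (0:ℝ) < 2 by norm_num)),
      mul_nonneg hxy2 (sub_nonneg.2 hb1)]
  · nlinarith [sq_nonneg (Real.sqrt (1 - a) * x - Real.sqrt (1 - c) * y),
      mul_nonneg hxy2 (sub_nonneg.2 hb2)]
end

section
/- For a ∈ [0,2], the operator V(x,y,z) = (x² + y² + z² - axy - axz + 2yz, (2+a)xy, (2+a)xz) maps the two-dimensional simplex S² into itself. -/
/-- For `a ∈ [0,2]`, the operator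
`V(x,y,z) = (x² + y² + z² - axy - axz + 2yz, (2+a)xy, (2+a)xz)` maps the
two-dimensional simplex into itself. -/
theorem two_dim_operator_preserves_simplex (a : ℝ) (ha : a ∈ Set.Icc (0 : ℝ) 2)
    (x y z : ℝ) (hx : 0 ≤ x) (hy : 0 ≤ y) (hz : 0 ≤ z) (hsum : x + y + z = 1) :
    0 ≤ x ^ 2 + y ^ 2 + z ^ 2 - a * x * y - a * x * z + 2 * y * z ∧
    0 ≤ (2 + a) * x * y ∧ 0 ≤ (2 + a) * x * z ∧
    (x ^ 2 + y ^ 2 + z ^ 2 - a * x * y - a * x * z + 2 * y * z) +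
      (2 + a) * x * y + (2 + a) * x * z = 1 := by
  obtain ⟨ha0, ha2⟩ := ha
  refine ⟨?_, ?_, ?_, ?_⟩
  · nlinarith [sq_nonneg (x - y - z), mul_nonneg (mul_nonneg (sub_nonneg.2 ha2) hx) (add_nonneg hy hz)]
  · positivity
  · positivity
  · nlinarith [sq_nonneg (x + y + z)]
end

section
/- For a ∈ [0,2], the fixed points of the operator V(x,y,z) = (x² + y² + z² - axy - axz + 2yz, (2+a)xy, (2+a)xz) in the simplex S² are exactly: the point (1,0,0), together with the family p_y = (1/(2+a), y, 1 - 1/(2+a) - y) for y ∈ [0, 1 - 1/(2+a)]. -/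
/-- For `a ∈ [0,2]`, the fixed points in the simplex `S²` of
`V(x,y,z) = (x² + y² + z² - axy - axz + 2yz, (2+a)xy, (2+a)xz)` are exactly
`(1,0,0)` and the family `p_y = (1/(2+a), y, 1 - 1/(2+a) - y)`,
`y ∈ [0, 1 - 1/(2+a)]`. -/
theorem fixed_points_of_two_dim_operator (a : ℝ) (ha : a ∈ Set.Icc (0 : ℝ) 2)
    (x y z : ℝ) (hx : 0 ≤ x) (hy : 0 ≤ y) (hz : 0 ≤ z) (hsum : x + y + z = 1) :
    (x ^ 2 + y ^ 2 + z ^ 2 - a * x * y - a * x * z + 2 * y * z = x ∧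
     (2 + a) * x * y = y ∧ (2 + a) * x * z = z) ↔
    ((x, y, z) = (1, 0, 0) ∨
      ∃ t ∈ Set.Icc (0 : ℝ) (1 - 1 / (2 + a)),
        (x, y, z) = (1 / (2 + a), t, 1 - 1 / (2 + a) - t)) := by
  obtain ⟨ha0, ha2⟩ := ha
  have h2a : (0:ℝ) < 2 + a := by linarith
  constructor
  · rintro ⟨h1, h2, h3⟩
    by_cases hy0 : y = 0
    · by_cases hz0 : z = 0
      · left
        have : x = 1 := by linarith
        simp [this, hy0, hz0]
      · right
        have hxv : x = 1 / (2 + a) := by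
          have : ((2 + a) * x - 1) * z = 0 := by ring_nf; linarith [h3]
          rcases mul_eq_zero.1 this with h | h
          · field_simp; linarith
          · exact absurd h hz0
        refine ⟨y, ⟨hy, ?_⟩, ?_⟩
        · rw [← hxv]; linarith
        · rw [Prod.mk.injEq, Prod.mk.injEq]
          exact ⟨hxv, rfl, by rw [← hxv]; linarith⟩
    · right
      have hxv : x = 1 / (2 + a) := by
        have : ((2 + a) * x - 1) * y = 0 := by ring_nf; linarith [h2]
        rcases mul_eq_zero.1 this with h | h
        · field_simp; linarith
        · exact absurd h hy0
      refine ⟨y, ⟨hy, ?_⟩, ?_⟩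
      · rw [← hxv]; linarith
      · rw [Prod.mk.injEq, Prod.mk.injEq]
        exact ⟨hxv, rfl, by rw [← hxv]; linarith⟩
  · rintro (h | ⟨t, ⟨ht0, ht1⟩, h⟩)
    · obtain ⟨hx1, hy1, hz1⟩ : x = 1 ∧ y = 0 ∧ z = 0 := by
        simpa [Prod.ext_iff] using h
      subst hx1 hy1 hz1; norm_num
    · obtain ⟨hx1, hy1, hz1⟩ : x = 1 / (2+a) ∧ y = t ∧ z = 1 - 1/(2+a) - t := by
        simpa [Prod.ext_iff] using h
      subst hx1 hy1 hz1
      have hne : (2 + a) ≠ 0 := ne_of_gt h2a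
      constructor
      · have hu : (2 + a) * (1 / (2 + a)) = 1 := mul_one_div_cancel hne
        linear_combination (1 / (2 + a) - 1) * hu
      constructor <;> field_simp
end

section
/- For a ∈ (0,3), the fixed points of W(y,z) = (y(3 - 3y + (a-3)z), z(3 - ay - 3z)) in the triangle T = {(y,z) : y,z ≥ 0, y+z ≤ 1} are exactly the four points (0,0), (0, 2/3), (2/3, 0), and (2a/(a²-3a+9), 2(3-a)/(a²-3a+9)). -/
/-- For `a ∈ (0,3)`, the fixed points of
`W(y,z) = (y(3 - 3y + (a-3)z), z(3 - ay - 3z))` in the triangle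
`T = {(y,z) : y,z ≥ 0, y+z ≤ 1}` are exactly `(0,0)`, `(0,2/3)`, `(2/3,0)`
and `(2a/(a²-3a+9), 2(3-a)/(a²-3a+9))`. -/
theorem fixed_points_of_W (a : ℝ) (ha : a ∈ Set.Ioo (0 : ℝ) 3)
    (y z : ℝ) (hy : 0 ≤ y) (hz : 0 ≤ z) (hT : y + z ≤ 1) :
    (y * (3 - 3 * y + (a - 3) * z) = y ∧ z * (3 - a * y - 3 * z) = z) ↔
    ((y, z) = (0, 0) ∨ (y, z) = (0, 2 / 3) ∨ (y, z) = (2 / 3, 0) ∨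
      (y, z) = (2 * a / (a ^ 2 - 3 * a + 9),
                2 * (3 - a) / (a ^ 2 - 3 * a + 9))) := by
  have hD : a ^ 2 - 3 * a + 9 > 0 := by nlinarith [sq_nonneg (a - 3/2)]
  have hD' : a ^ 2 - 3 * a + 9 ≠ 0 := ne_of_gt hD
  constructor
  · rintro ⟨h1, h2⟩
    have hy' : y = 0 ∨ 2 - 3 * y + (a - 3) * z = 0 := by
      rcases mul_eq_zero.mp (show y * (2 - 3 * y + (a - 3) * z) = 0 by linarith [h1]) with h | h
      · exact Or.inl h
      · exact Or.inr h
    have hz' : z = 0 ∨ 2 - a * y - 3 * z = 0 := by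
      rcases mul_eq_zero.mp (show z * (2 - a * y - 3 * z) = 0 by linarith [h2]) with h | h
      · exact Or.inl h
      · exact Or.inr h
    rcases hy' with hy0 | hy1 <;> rcases hz' with hz0 | hz1
    · exact Or.inl (by simp [hy0, hz0])
    · refine Or.inr (Or.inl ?_)
      simp only [Prod.mk.injEq]
      constructor
      · exact hy0
      · rw [hy0] at hz1; linarith
    · refine Or.inr (Or.inr (Or.inl ?_))
      simp only [Prod.mk.injEq]
      constructor
      · rw [hz0] at hy1; linarith
      · exact hz0
    · refine Or.inr (Or.inr (Or.inr ?_))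
      simp only [Prod.mk.injEq]
      constructor
      · rw [eq_div_iff hD']
        linear_combination -3 * hy1 - (a - 3) * hz1
      · rw [eq_div_iff hD']
        linear_combination a * hy1 - 3 * hz1
  · rintro (h | h | h | h) <;>
      obtain ⟨rfl, rfl⟩ := Prod.mk.injEq .. ▸ (Prod.mk.injEq .. ▸ h : _ ∧ _)
    · constructor <;> ring
    · constructor <;> ring
    · constructor <;> ring
    · have hD'' : a * (a - 3) + 9 ≠ 0 := by nlinarith [sq_nonneg (a - 3/2)]
      constructor <;> (field_simp; ring)
end

section
/- For a ∈ (0,3), the map W(y,z) = (y(3 - 3y + (a-3)z), z(3 - ay - 3z)) maps the triangle T = {(y,z) : y,z ≥ 0, y + z ≤ 1} into itself. -/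
/-- For `a ∈ (0,3)`, `W(y,z) = (y(3-3y+(a-3)z), z(3-ay-3z))` maps the triangle
`T = {(y,z) : y,z ≥ 0, y+z ≤ 1}` into itself. -/
theorem W_maps_triangle_to_itself (a : ℝ) (ha : a ∈ Set.Ioo (0 : ℝ) 3)
    (y z : ℝ) (hy : 0 ≤ y) (hz : 0 ≤ z) (hT : y + z ≤ 1) :
    0 ≤ y * (3 - 3 * y + (a - 3) * z) ∧
    0 ≤ z * (3 - a * y - 3 * z) ∧
    y * (3 - 3 * y + (a - 3) * z) + z * (3 - a * y - 3 * z) ≤ 1 := by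
  obtain ⟨ha0, ha3⟩ := ha
  refine ⟨?_, ?_, ?_⟩
  · apply mul_nonneg hy
    nlinarith
  · apply mul_nonneg hz
    nlinarith
  · nlinarith [sq_nonneg (3*(y+z) - 2), sq_nonneg (y - z), mul_nonneg hy hz]
end

section
/- For a ∈ (0,3), the line set M₃ = {(y,z) ∈ T : (3-a)y - az = 0} is invariant under W(y,z) = (y(3-3y+(a-3)z), z(3-ay-3z)); more precisely, for any (y,z) ∈ T with x = 1-y-z, the image (y',z') = W(y,z) satisfies (3-a)y' - az' = 3x((3-a)y - az). -/
/-- For `a ∈ (0,3)` and `(y,z) ∈ T` with `x = 1-y-z`, the image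
`(y',z') = W(y,z)` satisfies `(3-a)y' - az' = 3x((3-a)y - az)`; hence the line
`M₃ = {(y,z) ∈ T : (3-a)y - az = 0}` is invariant under `W`. -/
theorem line_M3_invariant (a : ℝ) (ha : a ∈ Set.Ioo (0 : ℝ) 3)
    (y z : ℝ) (hy : 0 ≤ y) (hz : 0 ≤ z) (hT : y + z ≤ 1) :
    (3 - a) * (y * (3 - 3 * y + (a - 3) * z)) -
        a * (z * (3 - a * y - 3 * z)) =
      3 * (1 - y - z) * ((3 - a) * y - a * z) ∧
    ((3 - a) * y - a * z = 0 →
      (3 - a) * (y * (3 - 3 * y + (a - 3) * z)) -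
        a * (z * (3 - a * y - 3 * z)) = 0) := by
  constructor
  · ring
  · intro h
    nlinarith [sq_nonneg y, sq_nonneg z]
end

section
/- For a ∈ (0,3), the open regions M₄ = {(y,z) ∈ T : y > 0 and z < ((3-a)/a)y} and M₅ = {(y,z) ∈ T : z > ((3-a)/a)y} satisfy: if x = 1-y-z > 0 then W maps M₄ into M₄ and M₅ into M₅, where W(y,z) = (y(3-3y+(a-3)z), z(3-ay-3z)). Moreover, if x = 0 then (3-a)y' - az' = 0, i.e., the image lies on the line M₃. -/
/-- For `a ∈ (0,3)`: when `x = 1-y-z > 0`, the regions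
`M₄ = {(y,z) ∈ T : z < ((3-a)/a)y}` and `M₅ = {(y,z) ∈ T : z > ((3-a)/a)y}`
are preserved by `W(y,z) = (y(3-3y+(a-3)z), z(3-ay-3z))`; when `x = 0`, the
image lands on the line `(3-a)y' - az' = 0`. -/
theorem regions_M4_M5_invariant (a : ℝ) (ha : a ∈ Set.Ioo (0 : ℝ) 3)
    (y z : ℝ) (hy : 0 ≤ y) (hz : 0 ≤ z) (hT : y + z ≤ 1) :
    (0 < 1 - y - z →
      (z < (3 - a) / a * y →
        (0 ≤ y * (3 - 3 * y + (a - 3) * z) ∧ 0 ≤ z * (3 - a * y - 3 * z) ∧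
          y * (3 - 3 * y + (a - 3) * z) + z * (3 - a * y - 3 * z) ≤ 1) ∧
        z * (3 - a * y - 3 * z) <
          (3 - a) / a * (y * (3 - 3 * y + (a - 3) * z))) ∧
      (z > (3 - a) / a * y →
        (0 ≤ y * (3 - 3 * y + (a - 3) * z) ∧ 0 ≤ z * (3 - a * y - 3 * z) ∧
          y * (3 - 3 * y + (a - 3) * z) + z * (3 - a * y - 3 * z) ≤ 1) ∧
        z * (3 - a * y - 3 * z) >
          (3 - a) / a * (y * (3 - 3 * y + (a - 3) * z)))) ∧
    (1 - y - z = 0 →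
      (3 - a) * (y * (3 - 3 * y + (a - 3) * z)) -
        a * (z * (3 - a * y - 3 * z)) = 0) := by
  obtain ⟨ha0, ha3⟩ := ha
  constructor
  · intro hx
    have hy' : 0 ≤ y * (3 - 3 * y + (a - 3) * z) := by nlinarith [mul_nonneg ha0.le hz]
    have hz' : 0 ≤ z * (3 - a * y - 3 * z) := by nlinarith [mul_nonneg (by linarith : (0:ℝ) ≤ 3 - a) hy]
    have hsum : y * (3 - 3 * y + (a - 3) * z) + z * (3 - a * y - 3 * z) ≤ 1 := by
      nlinarith [sq_nonneg (2 - 3 * y - 3 * z), sq_nonneg (y - z)]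
    constructor
    · intro h4
      have h4' : a * z < (3 - a) * y := by
        rw [div_mul_eq_mul_div, lt_div_iff₀ ha0] at h4
        linarith
      refine ⟨⟨hy', hz', hsum⟩, ?_⟩
      rw [div_mul_eq_mul_div, lt_div_iff₀ ha0]
      nlinarith [mul_pos hx (by linarith : (0:ℝ) < (3 - a) * y - a * z)]
    · intro h5
      have h5' : (3 - a) * y < a * z := by
        rw [gt_iff_lt, div_mul_eq_mul_div, div_lt_iff₀ ha0] at h5
        linarith
      refine ⟨⟨hy', hz', hsum⟩, ?_⟩
      rw [gt_iff_lt, div_mul_eq_mul_div, div_lt_iff₀ ha0]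
      nlinarith [mul_pos hx (by linarith : (0:ℝ) < a * z - (3 - a) * y)]
  · intro hx0
    linear_combination (3 * ((3 - a) * y - a * z)) * hx0
end

section
/- For a ∈ (0,3), the restriction of W(y,z) = (y(3-3y+(a-3)z), z(3-ay-3z)) to the invariant line M₃ = {(y, ((3-a)/a)y)} is conjugate to the logistic map t ↦ 3t(1-t): precisely, if z = ((3-a)/a)y, then the first coordinate of W(y,z) equals 3y(1 - ((9-3a+a²)/(3a))y), and under the substitution t = ((9-3a+a²)/(3a))·y this becomes t' = 3t(1-t). -/
/-- For `a ∈ (0,3)`, on the invariant line `z = ((3-a)/a)y` the map `W` is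
conjugate to the logistic map `t ↦ 3t(1-t)` via `t = ((9-3a+a²)/(3a))·y`. -/
theorem W_on_M3_conjugate_logistic (a : ℝ) (ha : a ∈ Set.Ioo (0 : ℝ) 3)
    (y z : ℝ) (hz : z = (3 - a) / a * y) :
    y * (3 - 3 * y + (a - 3) * z) =
      3 * y * (1 - (9 - 3 * a + a ^ 2) / (3 * a) * y) ∧
    (9 - 3 * a + a ^ 2) / (3 * a) * (y * (3 - 3 * y + (a - 3) * z)) =
      3 * ((9 - 3 * a + a ^ 2) / (3 * a) * y) *
        (1 - (9 - 3 * a + a ^ 2) / (3 * a) * y) := by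
  have ha0 : a ≠ 0 := ne_of_gt ha.1
  subst hz
  constructor <;> field_simp <;> ring
end
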